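/- arXiv:1802.02229 — 4 statements merged into one kernel-verified Lean document; each statement's English description precedes it below -/
import Mathlib

section
/- Over a finite tuple type T and a relation R : T → ℕ satisfying the key constraint on k, the following squash-preservation holds for any b : ℕ with b × b = b (e.g., b a predicate value), any E : ℕ, and any value e: ∑_t b × ‖E‖ × [k t = e] × R t = ‖∑_t b × ‖E‖ × [k t = e] × R t‖, where ‖n‖ = min n 1. -/
/-! The key constraint says exactly that, within each fibre of `k`, the values `R t` form a family
of orthogonal idempotents. Hence so do the summands `b * ‖E‖ * [k t = e] * R t`, their sum is
idempotent, and an idempotent natural number is `0` or `1`. -/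

theorem Nat.isIdempotentElem_iff_le_one {n : ℕ} : IsIdempotentElem n ↔ n ≤ 1 := by
  rw [IsIdempotentElem.iff_eq_zero_or_one]
  omega

theorem orthogonalIdempotents_fiber {T K M : Type*} [DecidableEq T] [DecidableEq K]
    [CommSemiring M] {R : T → M} {k : T → K}
    (hkey : ∀ t t' : T,
      (if k t = k t' then 1 else 0) * R t * R t' = (if t = t' then 1 else 0) * R t)
    (e : K) :
    OrthogonalIdempotents fun t ↦ (if k t = e then (1 : M) else 0) * R t := by
  refine OrthogonalIdempotents.iff_mul_eq.mpr fun t t' ↦ ?_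
  by_cases ht : k t = e
  · by_cases ht' : k t' = e
    · have h := hkey t t'
      rw [if_pos (ht.trans ht'.symm)] at h
      split_ifs at h ⊢ <;> simp_all
    · split_ifs <;> simp_all
  · simp [ht]

theorem key_squash_preservation {T K : Type*} [Fintype T] [DecidableEq T] [DecidableEq K]
    (R : T → ℕ) (k : T → K)
    (hkey : ∀ t t' : T,
      (if k t = k t' then 1 else 0) * R t * R t' = (if t = t' then 1 else 0) * R t)
    (b : ℕ) (hb : b * b = b) (E : ℕ) (e : K) :
    (∑ t : T, b * (min E 1) * (if k t = e then 1 else 0) * R t) =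
      min (∑ t : T, b * (min E 1) * (if k t = e then 1 else 0) * R t) 1 := by
  have hE : IsIdempotentElem (min E 1) := Nat.isIdempotentElem_iff_le_one.mpr (min_le_right _ _)
  have hsum : IsIdempotentElem (∑ t : T, b * (min E 1) * (if k t = e then 1 else 0) * R t) := by
    simp_rw [mul_assoc (b * min E 1), ← Finset.mul_sum]
    exact (IsIdempotentElem.mul hb hE).mul (orthogonalIdempotents_fiber hkey e).isIdempotentElem_sum
  exact (min_eq_left (Nat.isIdempotentElem_iff_le_one.mp hsum)).symm
end

section
/- Set-semantics idempotence of self-join under DISTINCT: over a finite tuple type T with relation R : T → ℕ and attribute a : T → A, for every value v : A, ‖∑_{t} [a t = v] × R t‖ = ‖∑_{t₁, t₂} [a t₁ = v] × [a t₁ = a t₂] × R t₁ × R t₂‖, i.e., 'SELECT DISTINCT R.a FROM R' equals 'SELECT DISTINCT x.a FROM R x, R y WHERE x.a = y.a'. -/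
open Finset

lemma Nat.min_mul_self_one (n : ℕ) : min (n * n) 1 = min n 1 := by
  rcases n with _ | n
  · rfl
  · simp

/-- On the diagonal `a t₁ = v`, the join condition `a t₁ = a t₂` is the selection `a t₂ = v`,
so the self-join factors as a product of two copies of the selection. -/
lemma sum_sum_ite_eq_mul_ite_eq {T A S : Type*} [Fintype T] [DecidableEq A] [CommSemiring S]
    (a : T → A) (f : T → S) (v : A) :
    ∑ t₁ : T, ∑ t₂ : T,
        (if a t₁ = v then 1 else 0) * (if a t₁ = a t₂ then 1 else 0) * f t₁ * f t₂ =
      (∑ t : T, (if a t = v then 1 else 0) * f t) * ∑ t : T, (if a t = v then 1 else 0) * f t := by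
  rw [sum_mul_sum]
  refine sum_congr rfl fun t₁ _ => sum_congr rfl fun t₂ _ => ?_
  by_cases h : a t₁ = v
  · subst h
    simp [eq_comm]
  · simp [h]

theorem distinct_self_join {T A : Type*} [Fintype T] [DecidableEq A]
    (a : T → A) (R : T → ℕ) (v : A) :
    min (∑ t : T, (if a t = v then 1 else 0) * R t) 1 =
      min (∑ t₁ : T, ∑ t₂ : T,
        (if a t₁ = v then 1 else 0) * (if a t₁ = a t₂ then 1 else 0) * R t₁ * R t₂) 1 := by
  rw [sum_sum_ite_eq_mul_ite_eq, Nat.min_mul_self_one]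
end

section
/- Self-join elimination under a key constraint (bag semantics): if R : T → ℕ satisfies the key constraint on k, then for every tuple t, ∑_{t₂, t₃} [t₂ = t] × [k t₃ = k t₂] × [a t₃ ≥ 12] × R t₃ × R t₂ = [a t ≥ 12] × R t; i.e., the index-lookup rewrite of Figure 1 is correct. -/
/-! The indicator `[t₂ = t]` fixes the outer tuple, and the key constraint rewrites the remaining
join factor `[k t₃ = k t] * R t₃ * R t` as `[t₃ = t] * R t₃`, so the inner sum is a point lookup. -/

theorem sum_mul_keyJoin_eq {T K S : Type*} [Fintype T] [DecidableEq T] [DecidableEq K]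
    [CommSemiring S] (k : T → K) (R : T → S)
    (hkey : ∀ t t' : T,
      (if k t = k t' then 1 else 0) * R t * R t' = (if t = t' then 1 else 0) * R t)
    (f : T → S) (t : T) :
    ∑ t' : T, f t' * ((if k t' = k t then 1 else 0) * R t' * R t) = f t * R t := by
  simp_rw [hkey, ← mul_assoc, mul_ite, mul_one, mul_zero, ite_mul, zero_mul]
  exact Fintype.sum_ite_eq' t (fun t' => f t' * R t')

theorem self_join_elimination {T K : Type*} [Fintype T] [DecidableEq T] [DecidableEq K]
    (a : T → ℤ) (k : T → K) (R : T → ℕ)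
    (hkey : ∀ t t' : T,
      (if k t = k t' then 1 else 0) * R t * R t' = (if t = t' then 1 else 0) * R t)
    (t : T) :
    (∑ t₂ : T, ∑ t₃ : T,
      (if t₂ = t then 1 else 0) * (if k t₃ = k t₂ then 1 else 0) *
        (if a t₃ ≥ 12 then 1 else 0) * R t₃ * R t₂) =
      (if a t ≥ 12 then 1 else 0) * R t := by
  calc (∑ t₂ : T, ∑ t₃ : T,
        (if t₂ = t then 1 else 0) * (if k t₃ = k t₂ then 1 else 0) *
          (if a t₃ ≥ 12 then 1 else 0) * R t₃ * R t₂)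
      = ∑ t₃ : T, (if k t₃ = k t then 1 else 0) * (if a t₃ ≥ 12 then 1 else 0) * R t₃ * R t := by
        rw [Fintype.sum_eq_single t fun t₂ h => by simp [h]]
        simp only [if_true, one_mul]
    _ = ∑ t₃ : T, (if a t₃ ≥ 12 then 1 else 0) * ((if k t₃ = k t then 1 else 0) * R t₃ * R t) :=
        Fintype.sum_congr _ _ fun _ => by ring
    _ = (if a t ≥ 12 then 1 else 0) * R t := sum_mul_keyJoin_eq k R hkey _ t
end

section
/- The Starburst rewrite: over finite tuple types, if itemno is a key of itm, then for all output tuples, ‖∑_{t₂, t'} P(t₂, t') × price(t') × itm(t₂)‖ applied on both sides of the rewrite are equal; concretely, ∑_{t₂} C(t₂) × ‖∑_{t'} D(t', t₂) × price(t')‖ × itm(t₂) = ‖∑_{t₂, t'} C(t₂) × D(t', t₂) × price(t') × itm(t₂)‖, whenever C(t₂) includes the key-equality condition [itemno t₂ = v] for the key itemno of itm; this follows from squash preservation under key constraints. -/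
/-!
Every tuple with `C t * itm t ≠ 0` has `itemno t = v`, so by the key constraint there is at most
one such tuple, and there the weight `C t * itm t` is `1`. A sum of weighted terms with at most one
nonzero weight, equal to `1`, commutes with the squash `min · 1`.
-/

open Finset

theorem sum_mul_min_one_eq_min_sum_mul {ι R : Type*} [Fintype ι] [Semiring R] [LinearOrder R]
    [ZeroLEOneClass R] {w S : ι → R} (hw : ∀ t, w t = 0 ∨ w t = 1)
    (hsupp : (Function.support w).Subsingleton) :
    ∑ t, w t * min (S t) 1 = min (∑ t, w t * S t) 1 := by
  by_cases hzero : ∀ t, w t = 0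
  · simp [hzero]
  obtain ⟨t₀, ht₀⟩ := not_forall.mp hzero
  have hwt₀ : w t₀ = 1 := (hw t₀).resolve_left ht₀
  have hoff : ∀ t ≠ t₀, w t = 0 := fun t ht => by
    by_contra h
    exact ht (hsupp h ht₀)
  rw [Fintype.sum_eq_single t₀ (fun t ht => by simp [hoff t ht]),
    Fintype.sum_eq_single t₀ (fun t ht => by simp [hoff t ht]), hwt₀, one_mul, one_mul]

section KeyConstraint

variable {T K : Type*} [DecidableEq T] [DecidableEq K]

def IsKey (itemno : T → K) (itm : T → ℕ) : Prop :=
  ∀ t t' : T, (if itemno t = itemno t' then 1 else 0) * itm t * itm t' =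
    (if t = t' then 1 else 0) * itm t

variable {itm : T → ℕ} {itemno : T → K}

theorem isIdempotentElem_of_key (hkey : IsKey itemno itm) (t : T) : IsIdempotentElem (itm t) :=
  show itm t * itm t = itm t by simpa only [if_true, one_mul] using hkey t t

theorem eq_of_itemno_eq_of_key (hkey : IsKey itemno itm) {t t' : T} (ht : itm t ≠ 0)
    (ht' : itm t' ≠ 0) (h : itemno t = itemno t') : t = t' := by
  by_contra hne
  simpa [h, hne, ht, ht'] using hkey t t'

theorem support_mul_subsingleton_of_key (hkey : IsKey itemno itm) {C : T → ℕ} {v : K}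
    (hC : Function.support C ⊆ itemno ⁻¹' {v}) :
    (Function.support fun t => C t * itm t).Subsingleton := by
  intro t ht t' ht'
  simp only [Function.mem_support, ne_eq, mul_eq_zero, not_or] at ht ht'
  exact eq_of_itemno_eq_of_key hkey ht.2 ht'.2 ((hC ht.1).trans (hC ht'.1).symm)

end KeyConstraint

theorem starburst_rewrite_general {T₁ T₂ K : Type*} [Fintype T₁] [Fintype T₂]
    [DecidableEq T₁] [DecidableEq K]
    (itm : T₁ → ℕ) (itemno : T₁ → K) (price : T₂ → ℕ)
    (hkey : ∀ t t' : T₁,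
      (if itemno t = itemno t' then 1 else 0) * itm t * itm t' =
        (if t = t' then 1 else 0) * itm t)
    (C : T₁ → ℕ) (D : T₂ → T₁ → ℕ)
    (hC : ∀ t₂ : T₁, C t₂ * C t₂ = C t₂)
    (v : K)
    (hCkey : ∀ t₂ : T₁, C t₂ = (if itemno t₂ = v then 1 else 0) * C t₂) :
    (∑ t₂ : T₁, C t₂ * min (∑ t' : T₂, D t' t₂ * price t') 1 * itm t₂) =
      min (∑ t₂ : T₁, ∑ t' : T₂, C t₂ * D t' t₂ * price t' * itm t₂) 1 := by
  have hw : ∀ t, C t * itm t = 0 ∨ C t * itm t = 1 := fun t =>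
    IsIdempotentElem.iff_eq_zero_or_one.mp
      (IsIdempotentElem.mul (hC t) (isIdempotentElem_of_key hkey t))
  have hCv : Function.support C ⊆ itemno ⁻¹' {v} := fun t ht => by
    by_contra h
    rw [Set.mem_preimage, Set.mem_singleton_iff] at h
    exact ht (by rw [hCkey t, if_neg h, zero_mul])
  calc ∑ t, C t * min (∑ t', D t' t * price t') 1 * itm t
      = ∑ t, C t * itm t * min (∑ t', D t' t * price t') 1 := sum_congr rfl fun t _ => by ring
    _ = min (∑ t, C t * itm t * ∑ t', D t' t * price t') 1 :=
      sum_mul_min_one_eq_min_sum_mul hw (support_mul_subsingleton_of_key hkey hCv)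
    _ = min (∑ t, ∑ t', C t * D t' t * price t' * itm t) 1 := by
      simp only [mul_sum]
      congr 1
      exact sum_congr rfl fun t _ => sum_congr rfl fun t' _ => by ring

theorem starburst_rewrite {T₁ T₂ K : Type*} [Fintype T₁] [Fintype T₂]
    [DecidableEq T₁] [DecidableEq K]
    (itm : T₁ → ℕ) (itemno : T₁ → K) (price : T₂ → ℕ)
    (hkey : ∀ t t' : T₁,
      (if itemno t = itemno t' then 1 else 0) * itm t * itm t' =
        (if t = t' then 1 else 0) * itm t)
    (C : T₁ → ℕ) (D : T₂ → T₁ → ℕ)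
    (hC : ∀ t₂ : T₁, C t₂ * C t₂ = C t₂)
    (hD : ∀ (t' : T₂) (t₂ : T₁), D t' t₂ * D t' t₂ = D t' t₂)
    (v : K)
    (hCkey : ∀ t₂ : T₁, C t₂ = (if itemno t₂ = v then 1 else 0) * C t₂) :
    (∑ t₂ : T₁, C t₂ * min (∑ t' : T₂, D t' t₂ * price t') 1 * itm t₂) =
      min (∑ t₂ : T₁, ∑ t' : T₂, C t₂ * D t' t₂ * price t' * itm t₂) 1 :=
  starburst_rewrite_general itm itemno price hkey C D hC v hCkey
end
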